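/- Let Φ be a Young function satisfying both the Δ2- and ∇2-conditions. Then there exists p with 1 < p < ∞ and a constant C_p > 0 such that for every t > 0, the Lebesgue–Stieltjes integral ∫ₜ^∞ s^{-p} dΦ(s) ≤ C_p · Φ(t)/t^p. -/

import Mathlib

open MeasureTheory Set

/-! Iterating the Δ₂-condition gives `Φ (2 ^ k * t) ≤ μ ^ k * Φ t`. Split `(t, ∞)` into the dyadic
blocks `(2 ^ k t, 2 ^ (k + 1) t]`; on the `k`-th block `s ^ (-p) ≤ (2 ^ k t) ^ (-p)` and the
`Φ`-mass is at most `Φ (2 ^ (k + 1) t)`. For `p = log₂ μ + 1`, i.e. `2 ^ p = 2 μ`, the block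
contributions are at most `μ Φ(t) / t ^ p · 2 ^ (-k)`, and summing the geometric series gives
the bound with `C_p = 2 μ`. -/

theorem Ioi_subset_iUnion_Ioc_pow_mul {r t : ℝ} (hr : 1 < r) (ht : 0 < t) :
    Ioi t ⊆ ⋃ k : ℕ, Ioc (r ^ k * t) (r ^ (k + 1) * t) := by
  intro x (hx : t < x)
  obtain ⟨n, hn_lo, hn_hi⟩ := exists_mem_Ioc_zpow (div_pos (ht.trans hx) ht) hr
  have hn : 0 ≤ n := by
    have := (one_lt_zpow_iff_right₀ hr).1 (((one_lt_div ht).2 hx).trans_le hn_hi)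
    omega
  lift n to ℕ using hn
  refine mem_iUnion.2 ⟨n, ?_, ?_⟩
  · simpa [lt_div_iff₀ ht] using hn_lo
  · exact_mod_cast (div_le_iff₀ ht).1 hn_hi

theorem setLIntegral_Ioi_le_of_dyadic {ν : Measure ℝ} {f : ℝ → ENNReal} {t : ℝ} {C : ENNReal}
    (ht : 0 < t) (h : ∀ k : ℕ, ∫⁻ s in Ioc (2 ^ k * t) (2 ^ (k + 1) * t), f s ∂ν ≤ C * 2⁻¹ ^ k) :
    ∫⁻ s in Ioi t, f s ∂ν ≤ 2 * C :=
  calc ∫⁻ s in Ioi t, f s ∂ν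
      ≤ ∫⁻ s in ⋃ k : ℕ, Ioc (2 ^ k * t) (2 ^ (k + 1) * t), f s ∂ν :=
        lintegral_mono_set (Ioi_subset_iUnion_Ioc_pow_mul one_lt_two ht)
    _ ≤ ∑' k : ℕ, ∫⁻ s in Ioc (2 ^ k * t) (2 ^ (k + 1) * t), f s ∂ν := lintegral_iUnion_le _ _
    _ ≤ ∑' k : ℕ, C * 2⁻¹ ^ k := ENNReal.tsum_le_tsum h
    _ = 2 * C := by rw [ENNReal.tsum_mul_left, ENNReal.tsum_geometric_two, mul_comm]

theorem StieltjesFunction.setLIntegral_Ioc_rpow_neg_le (Φ : StieltjesFunction ℝ) {a b p : ℝ}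
    (ha : 0 < a) (hp : 0 ≤ p) (hΦa : 0 ≤ Φ a) :
    ∫⁻ s in Ioc a b, ENNReal.ofReal (s ^ (-p)) ∂Φ.measure ≤ ENNReal.ofReal (a ^ (-p) * Φ b) :=
  calc ∫⁻ s in Ioc a b, ENNReal.ofReal (s ^ (-p)) ∂Φ.measure
      ≤ ∫⁻ _ in Ioc a b, ENNReal.ofReal (a ^ (-p)) ∂Φ.measure :=
        setLIntegral_mono measurable_const fun s hs ↦
          ENNReal.ofReal_le_ofReal (Real.rpow_le_rpow_of_nonpos ha hs.1.le (neg_nonpos.2 hp))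
    _ = ENNReal.ofReal (a ^ (-p)) * ENNReal.ofReal (Φ b - Φ a) := by
        rw [setLIntegral_const, Φ.measure_Ioc]
    _ ≤ ENNReal.ofReal (a ^ (-p)) * ENNReal.ofReal (Φ b) := by gcongr; linarith
    _ = ENNReal.ofReal (a ^ (-p) * Φ b) := (ENNReal.ofReal_mul (by positivity)).symm

section Doubling

variable {f : ℝ → ℝ} {μ : ℝ}

theorem nonneg_of_doubling (hf : Monotone f) (hμ : 1 < μ) {t : ℝ} (ht : 0 < t)
    (h : f (2 * t) ≤ μ * f t) : 0 ≤ f t := by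
  have : f t ≤ f (2 * t) := hf (by linarith)
  nlinarith

theorem le_pow_mul_of_doubling (hμ : 0 ≤ μ) (hf : ∀ t > 0, f (2 * t) ≤ μ * f t) {t : ℝ}
    (ht : 0 < t) : ∀ k : ℕ, f (2 ^ k * t) ≤ μ ^ k * f t
  | 0 => by simp
  | k + 1 =>
    calc f (2 ^ (k + 1) * t) = f (2 * (2 ^ k * t)) := by ring_nf
      _ ≤ μ * f (2 ^ k * t) := hf _ (by positivity)
      _ ≤ μ * (μ ^ k * f t) := by gcongr; exact le_pow_mul_of_doubling hμ hf ht k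
      _ = μ ^ (k + 1) * f t := by ring

end Doubling

theorem two_pow_mul_rpow_neg_mul_pow_succ {μ p t : ℝ} (h2p : (2 : ℝ) ^ p = 2 * μ) (ht : 0 < t)
    (k : ℕ) (x : ℝ) : (2 ^ k * t) ^ (-p) * (μ ^ (k + 1) * x) = μ * (x / t ^ p) * 2⁻¹ ^ k := by
  have hμ : μ ≠ 0 := by
    rintro rfl
    exact (Real.rpow_pos_of_pos two_pos p).ne' (by simpa using h2p)
  rw [Real.rpow_neg (by positivity), Real.mul_rpow (by positivity) ht.le, ← Real.rpow_natCast,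
    ← Real.rpow_mul zero_le_two, mul_comm _ p, Real.rpow_mul zero_le_two, h2p, Real.rpow_natCast, inv_pow]
  field_simp
  ring

theorem stmt_6_general (Φ : StieltjesFunction ℝ)
    (hΔ2 : ∃ μ : ℝ, 1 < μ ∧ ∀ t > 0, Φ (2 * t) ≤ μ * Φ t) :
    ∃ p : ℝ, 1 < p ∧ ∃ Cp : ℝ, 0 < Cp ∧ ∀ t : ℝ, 0 < t →
      ∫⁻ s in Set.Ioi t, ENNReal.ofReal (s ^ (-p)) ∂Φ.measure
        ≤ ENNReal.ofReal (Cp * (Φ t / t ^ p)) := by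
  obtain ⟨μ, hμ1, hμ⟩ := hΔ2
  have hμ0 : 0 < μ := one_pos.trans hμ1
  have hΦ_nonneg : ∀ t > 0, 0 ≤ Φ t := fun t ht ↦ nonneg_of_doubling Φ.mono hμ1 ht (hμ t ht)
  set p := Real.logb 2 μ + 1
  have hp : 1 < p := by linarith [Real.logb_pos one_lt_two hμ1]
  have h2p : (2 : ℝ) ^ p = 2 * μ := by
    rw [Real.rpow_add two_pos, Real.rpow_logb two_pos (by norm_num) hμ0, Real.rpow_one, mul_comm]
  refine ⟨p, hp, 2 * μ, by positivity, fun t ht ↦ ?_⟩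
  rw [mul_assoc, ENNReal.ofReal_mul zero_le_two, ENNReal.ofReal_ofNat]
  refine setLIntegral_Ioi_le_of_dyadic ht fun k ↦ ?_
  calc ∫⁻ s in Ioc (2 ^ k * t) (2 ^ (k + 1) * t), ENNReal.ofReal (s ^ (-p)) ∂Φ.measure
      ≤ ENNReal.ofReal ((2 ^ k * t) ^ (-p) * Φ (2 ^ (k + 1) * t)) :=
        Φ.setLIntegral_Ioc_rpow_neg_le (by positivity) (by linarith) (hΦ_nonneg _ (by positivity))
    _ ≤ ENNReal.ofReal ((2 ^ k * t) ^ (-p) * (μ ^ (k + 1) * Φ t)) := by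
        gcongr
        exact le_pow_mul_of_doubling hμ0.le hμ ht (k + 1)
    _ = ENNReal.ofReal (μ * (Φ t / t ^ p)) * 2⁻¹ ^ k := by
        rw [two_pow_mul_rpow_neg_mul_pow_succ h2p ht, ENNReal.ofReal_mul' (by positivity),
          ENNReal.ofReal_pow (by norm_num), ENNReal.ofReal_inv_of_pos two_pos,
          ENNReal.ofReal_ofNat]

/-- If Φ is a Young function satisfying Δ2 and ∇2, then there exist
1 < p < ∞ and C_p > 0 such that ∫ₜ^∞ s^{-p} dΦ(s) ≤ C_p Φ(t)/t^p for all t > 0,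
where the integral is the Lebesgue–Stieltjes integral with respect to Φ. -/
theorem stmt_6 (Φ : StieltjesFunction ℝ)
    (hΦ0 : Φ 0 = 0)
    (hnonneg : ∀ t, 0 ≤ t → 0 ≤ Φ t)
    (hmono : StrictMonoOn Φ (Set.Ici 0))
    (hconv : ConvexOn ℝ (Set.Ici 0) Φ)
    (hΔ2 : ∃ μ : ℝ, 1 < μ ∧ ∀ t > 0, Φ (2 * t) ≤ μ * Φ t)
    (hnabla2 : ∃ l : ℝ, 1 < l ∧ ∀ t > 0, 2 * l * Φ t ≤ Φ (l * t)) :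
    ∃ p : ℝ, 1 < p ∧ ∃ Cp : ℝ, 0 < Cp ∧ ∀ t : ℝ, 0 < t →
      ∫⁻ s in Set.Ioi t, ENNReal.ofReal (s ^ (-p)) ∂Φ.measure
        ≤ ENNReal.ofReal (Cp * (Φ t / t ^ p)) :=
  stmt_6_general Φ hΔ2
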